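/- arXiv:1707.02493 — 3 statements merged into one kernel-verified Lean document; each statement's English description precedes it below -/
import Mathlib

section
/- Let n ≥ 1 and s ≥ 1 be integers, and let a = (a_1,…,a_s) and b = (b_1,…,b_s) be vectors in ℤ^s such that for every vector A = (A_1,…,A_s) ∈ ℤ^s, the dot product a·A is divisible by n if and only if b·A is divisible by n. Then there exists an integer u coprime to n such that u·a_i ≡ b_i (mod n) for every i = 1,…,s. -/
/-!
Reduce mod `n`: the hypothesis says the homomorphisms `A ↦ a ⬝ᵥ A` and `A ↦ b ⬝ᵥ A` from `ℤ^s` to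
`ZMod n` have the same kernel. The range of the first is cyclic, generated by the image of some
`A₀`; equal kernels force the images of `A₀` under both maps to have the same additive order, and in
`ZMod n` two elements of the same additive order differ by a unit factor (write each as a unit times
a divisor `d` of `n`; the order is `n / d`). That unit then relates the two maps everywhere, and
evaluating at the standard basis vectors gives the congruences.
-/

namespace ZMod

variable {n : ℕ}

theorem addOrderOf_unit_mul (u : (ZMod n)ˣ) (c : ZMod n) : addOrderOf (u * c) = addOrderOf c :=
  addOrderOf_injective (AddMonoidHom.mulLeft (u : ZMod n)) u.isUnit.mul_right_injective c

variable [NeZero n]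

theorem addOrderOf_natCast_of_dvd {d : ℕ} (hd : d ∣ n) : addOrderOf (d : ZMod n) = n / d := by
  rw [addOrderOf_coe _ (NeZero.ne n), Nat.gcd_eq_right hd]

theorem exists_unit_mul_eq_of_addOrderOf_eq {c c' : ZMod n} (h : addOrderOf c = addOrderOf c') :
    ∃ u : (ZMod n)ˣ, c' = u * c := by
  obtain ⟨d, hd, v, hv, rfl⟩ := eq_unit_mul_divisor c
  obtain ⟨d', hd', w, hw, rfl⟩ := eq_unit_mul_divisor c'
  lift v to (ZMod n)ˣ using hv
  lift w to (ZMod n)ˣ using hw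
  rw [addOrderOf_unit_mul, addOrderOf_unit_mul, addOrderOf_natCast_of_dvd hd,
    addOrderOf_natCast_of_dvd hd'] at h
  have hdd' : d = d' := by
    rw [← Nat.div_div_self hd (NeZero.ne n), h, Nat.div_div_self hd' (NeZero.ne n)]
  exact ⟨w * v⁻¹, by rw [hdd', Units.val_mul, mul_assoc, Units.inv_mul_cancel_left]⟩

end ZMod

namespace AddMonoidHom

variable {M : Type*} [AddGroup M]

theorem exists_zsmul_eq_of_isAddCyclic_range {G : Type*} [AddGroup G] (f : M →+ G)
    [IsAddCyclic f.range] : ∃ x₀, ∀ x, ∃ k : ℤ, f x = k • f x₀ := by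
  obtain ⟨⟨_, x₀, rfl⟩, hgen⟩ := IsAddCyclic.exists_generator (α := f.range)
  refine ⟨x₀, fun x => ?_⟩
  obtain ⟨k, hk⟩ := AddSubgroup.mem_zmultiples_iff.1 (hgen ⟨f x, x, rfl⟩)
  exact ⟨k, (congrArg Subtype.val hk).symm⟩

theorem exists_unit_mul_eq_of_ker_eq {n : ℕ} [NeZero n] {f g : M →+ ZMod n}
    (h : f.ker = g.ker) : ∃ u : (ZMod n)ˣ, ∀ x, g x = u * f x := by
  obtain ⟨x₀, hx₀⟩ := f.exists_zsmul_eq_of_isAddCyclic_range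
  have hsmul (k : ℤ) : k • f x₀ = 0 ↔ k • g x₀ = 0 := by
    rw [← map_zsmul, ← map_zsmul, ← mem_ker, ← mem_ker, h]
  obtain ⟨u, hu⟩ := ZMod.exists_unit_mul_eq_of_addOrderOf_eq
    (addOrderOf_eq_addOrderOf_iff.2 fun k => by exact_mod_cast hsmul k)
  refine ⟨u, fun x => ?_⟩
  obtain ⟨k, hk⟩ := hx₀ x
  have hg : g (x - k • x₀) = 0 := by
    rw [← mem_ker, ← h, mem_ker, map_sub, map_zsmul, hk, sub_self]
  rw [map_sub, map_zsmul, sub_eq_zero] at hg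
  rw [hg, hk, hu, mul_smul_comm]

end AddMonoidHom

theorem stmt_0_general (n s : ℕ) (hn : 1 ≤ n) (a b : Fin s → ℤ)
    (h : ∀ A : Fin s → ℤ, (n : ℤ) ∣ ∑ i, a i * A i ↔ (n : ℤ) ∣ ∑ i, b i * A i) :
    ∃ u : ℤ, IsCoprime u (n : ℤ) ∧ ∀ i, u * a i ≡ b i [ZMOD (n : ℕ)] := by
  have : NeZero n := ⟨by omega⟩
  let dotMod (v : Fin s → ℤ) : (Fin s → ℤ) →+ ZMod n :=
    (Int.castAddHom (ZMod n)).comp (AddMonoidHom.mk' (v ⬝ᵥ ·) (dotProduct_add v))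
  have hker : (dotMod a).ker = (dotMod b).ker := by
    ext A
    simp only [dotMod, AddMonoidHom.mem_ker, AddMonoidHom.comp_apply, AddMonoidHom.mk'_apply,
      Int.coe_castAddHom, ZMod.intCast_zmod_eq_zero_iff_dvd]
    exact h A
  obtain ⟨u, hu⟩ := AddMonoidHom.exists_unit_mul_eq_of_ker_eq hker
  refine ⟨(u : ZMod n).val, Nat.isCoprime_iff_coprime.2 (ZMod.val_coe_unit_coprime u), fun i => ?_⟩
  rw [← ZMod.intCast_eq_intCast_iff]
  simpa [dotMod, dotProduct_single] using (hu (Pi.single i 1)).symm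

theorem stmt_0 (n s : ℕ) (hn : 1 ≤ n) (hs : 1 ≤ s) (a b : Fin s → ℤ)
    (h : ∀ A : Fin s → ℤ, (n : ℤ) ∣ ∑ i, a i * A i ↔ (n : ℤ) ∣ ∑ i, b i * A i) :
    ∃ u : ℤ, IsCoprime u (n : ℤ) ∧ ∀ i, u * a i ≡ b i [ZMOD (n : ℕ)] :=
  stmt_0_general n s hn a b h
end

section
/- Let G = (ℤ/nℤ)^s and suppose T_1,…,T_s are cyclic subgroups of G that together generate G. Then each T_i is cyclic of order n and G is the internal direct product T_1 × T_2 × ⋯ × T_s. -/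
/-!
Every element of `(ℤ/nℤ)^s` is killed by `n`, so each cyclic `T i` has at most `n` elements.
The sum map `⨁ i, T i → G` is onto, whence `n ^ s ≤ ∏ i, |T i| ≤ n ^ s`: all `|T i|` equal `n`,
and the sum map, being a surjection between finite sets of the same size, is injective.
-/

open DFinsupp

theorem AddSubgroup.card_closure_singleton_dvd {G : Type*} [AddGroup G] {n : ℕ} {g : G}
    (hg : n • g = 0) : Nat.card (closure {g}) ∣ n := by
  rw [← zmultiples_eq_closure, Nat.card_zmultiples]
  exact addOrderOf_dvd_of_nsmul_eq_zero hg

theorem Finset.eq_of_le_of_pow_card_le_prod {ι : Type*} [Fintype ι] {c : ι → ℕ} {n : ℕ}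
    (hpos : ∀ i, 0 < c i) (hle : ∀ i, c i ≤ n) (hprod : n ^ Fintype.card ι ≤ ∏ i, c i) (i : ι) :
    c i = n := by
  by_contra hne
  have hlt : ∏ j, c j < ∏ _j : ι, n :=
    prod_lt_prod (fun j _ => hpos j) (fun j _ => hle j)
      ⟨i, mem_univ i, lt_of_le_of_ne (hle i) hne⟩
  rw [prod_const, card_univ] at hlt
  exact hlt.not_ge hprod

section DirectSum

variable {G ι : Type*} [AddCommGroup G] (H : ι → AddSubgroup G)

theorem AddSubgroup.sumAddHom_subtype_surjective [DecidableEq ι] (hH : ⨆ i, H i = ⊤) :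
    Function.Surjective (sumAddHom fun i => (H i).subtype) := by
  have hsup : ⨆ i, (H i).toIntSubmodule = ⊤ := by
    rw [← AddSubgroup.toIntSubmodule.map_iSup, hH, AddSubgroup.toIntSubmodule.map_top]
  rw [Submodule.iSup_eq_range_dfinsupp_lsum, LinearMap.range_eq_top] at hsup
  exact hsup

theorem AddSubgroup.card_dfinsupp [Fintype ι] : Nat.card (Π₀ i, H i) = ∏ i, Nat.card (H i) := by
  rw [Nat.card_congr DFinsupp.equivFunOnFintype, Nat.card_pi]

variable [Fintype ι] [DecidableEq ι] [Finite G]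

theorem AddSubgroup.card_le_prod_card_of_iSup_eq_top (hH : ⨆ i, H i = ⊤) :
    Nat.card G ≤ ∏ i, Nat.card (H i) := by
  have : Finite (Π₀ i, H i) := Finite.of_equiv _ DFinsupp.equivFunOnFintype.symm
  rw [← card_dfinsupp]
  exact Nat.card_le_card_of_surjective _ (sumAddHom_subtype_surjective H hH)

theorem AddSubgroup.iSupIndep_of_prod_card_eq_card (hH : ⨆ i, H i = ⊤)
    (hcard : ∏ i, Nat.card (H i) = Nat.card G) : iSupIndep H := by
  have : Finite (Π₀ i, H i) := Finite.of_equiv _ DFinsupp.equivFunOnFintype.symm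
  apply iSupIndep_of_dfinsuppSumAddHom_injective'
  refine ((Nat.bijective_iff_surjective_and_card _).mpr
    ⟨sumAddHom_subtype_surjective H hH, ?_⟩).injective
  rw [card_dfinsupp, hcard]

end DirectSum

theorem stmt_3 (n s : ℕ) (hn : 0 < n) (T : Fin s → AddSubgroup (Fin s → ZMod n))
    (hcyc : ∀ i, ∃ g, T i = AddSubgroup.closure {g})
    (hgen : (⨆ i, T i) = ⊤) :
    (∀ i, Nat.card (T i) = n) ∧ iSupIndep T := by
  have : NeZero n := ⟨hn.ne'⟩
  have hle : ∀ i, Nat.card (T i) ≤ n := fun i => by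
    obtain ⟨g, hg⟩ := hcyc i
    rw [hg]
    exact Nat.le_of_dvd hn (AddSubgroup.card_closure_singleton_dvd (by ext; simp))
  have hcard : ∀ i, Nat.card (T i) = n :=
    Finset.eq_of_le_of_pow_card_le_prod (fun _ => Nat.card_pos) hle (by
      simpa using AddSubgroup.card_le_prod_card_of_iSup_eq_top T hgen)
  exact ⟨hcard, AddSubgroup.iSupIndep_of_prod_card_eq_card T hgen (by simp [hcard])⟩
end

section
/- Let S = (m_{ij}) be an s×s symmetric sign matrix, i.e., m_{ii} = 0, m_{ij} = m_{ji} = ±1 for i ≠ j. Then there exist distinct odd primes p_1,…,p_s, all congruent to 1 mod 4, such that m_{ij} = (p_i/p_j) (Legendre symbol) for all i ≠ j. -/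
/-!
Build the primes one at a time. Given `p₁, …, pₖ`, Dirichlet's theorem together with the Chinese
remainder theorem gives a prime `q ≡ 1 (mod 4)`, larger than all `pᵢ`, lying in a prescribed
residue class modulo each `pᵢ`; choosing a residue or a non-residue class fixes `(q/pᵢ)` as
wanted. Since `q ≡ 1 (mod 4)`, reciprocity gives `(pᵢ/q) = (q/pᵢ)`, which is why the sign
matrix has to be symmetric.
-/

open Finset

theorem Nat.exists_prime_gt_and_modEq_of_pairwise_coprime {ι : Type*} [Fintype ι]
    {n a : ι → ℕ} (hn : ∀ i, n i ≠ 0) (hcop : Pairwise (Function.onFun Nat.Coprime n))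
    (ha : ∀ i, (a i).Coprime (n i)) (N : ℕ) :
    ∃ q > N, q.Prime ∧ ∀ i, q ≡ a i [MOD n i] := by
  classical
  obtain ⟨k, hk⟩ := Nat.chineseRemainderOfFinset a n univ (fun i _ => hn i)
    (hcop.set_pairwise _)
  have hk_coprime : k.Coprime (∏ i, n i) :=
    Nat.Coprime.prod_right fun i _ => (hk i (mem_univ i)).gcd_eq.trans (ha i)
  have : NeZero (∏ i, n i) := ⟨prod_ne_zero_iff.mpr fun i _ => hn i⟩
  obtain ⟨q, hqN, hq, hqk⟩ :=
    Nat.forall_exists_prime_gt_and_eq_mod (ZMod.unitOfCoprime k hk_coprime).isUnit N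
  refine ⟨q, hqN, hq, fun i => ?_⟩
  have hqk : q ≡ k [MOD ∏ i, n i] := (ZMod.natCast_eq_natCast_iff _ _ _).mp hqk
  exact (hqk.of_dvd (dvd_prod_of_mem n (mem_univ i))).trans (hk i (mem_univ i))

theorem Nat.Prime.exists_jacobiSym_eq {p : ℕ} (hp : p.Prime) (hp2 : p ≠ 2) {ε : ℤ}
    (hε : ε = 1 ∨ ε = -1) : ∃ a : ℕ, a.Coprime p ∧ jacobiSym a p = ε := by
  have : Fact p.Prime := ⟨hp⟩
  suffices ∃ a : ℕ, jacobiSym a p = ε by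
    obtain ⟨a, ha⟩ := this
    refine ⟨a, ?_, ha⟩
    have : jacobiSym a p ≠ 0 := by rcases hε with rfl | rfl <;> simp [ha]
    rw [Ne, jacobiSym.eq_zero_iff_not_coprime, not_not, Int.gcd_natCast_natCast] at this
    exact this
  rcases hε with rfl | rfl
  · exact ⟨1, by simp⟩
  · obtain ⟨b, hb⟩ :=
      quadraticChar_exists_neg_one (F := ZMod p) (by rwa [ZMod.ringChar_zmod_n])
    refine ⟨b.val, ?_⟩
    rw [← jacobiSym.legendreSym.to_jacobiSym, legendreSym]
    simpa using hb

theorem Nat.exists_prime_gt_one_mod_four_and_jacobiSym_eq {ι : Type*} [Fintype ι] {p : ι → ℕ}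
    (hp : ∀ i, (p i).Prime) (hodd : ∀ i, Odd (p i)) (hinj : Function.Injective p)
    {ε : ι → ℤ} (hε : ∀ i, ε i = 1 ∨ ε i = -1) (N : ℕ) :
    ∃ q > N, q.Prime ∧ q % 4 = 1 ∧ ∀ i, jacobiSym q (p i) = ε i := by
  choose a ha_coprime ha using fun i =>
    (hp i).exists_jacobiSym_eq ((hodd i).ne_two_of_dvd_nat dvd_rfl) (hε i)
  have hodd_coprime : ∀ i, Nat.Coprime 4 (p i) := fun i =>
    Nat.Coprime.pow_left 2 (Nat.coprime_two_left.mpr (hodd i))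
  -- the modulus `4` sits at `none`, the primes `p i` at `some i`
  obtain ⟨q, hqN, hq, hqa⟩ := Nat.exists_prime_gt_and_modEq_of_pairwise_coprime
    (n := fun o : Option ι => o.elim 4 p) (a := fun o : Option ι => o.elim 1 a)
    (by rintro (_ | i); exacts [four_ne_zero, (hp i).ne_zero])
    (by
      rintro (_ | i) (_ | j) hij
      · exact absurd rfl hij
      · exact hodd_coprime j
      · exact (hodd_coprime i).symm
      · exact (Nat.coprime_primes (hp i) (hp j)).mpr
          (hinj.ne ((Option.some_injective _).ne_iff.mp hij)))
    (by rintro (_ | i); exacts [Nat.coprime_one_left 4, ha_coprime i]) N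
  refine ⟨q, hqN, hq, hqa none, fun i => ?_⟩
  rw [← ha i]
  exact jacobiSym.mod_left' (Int.natCast_modEq_iff.mpr (hqa (some i)))

theorem stmt_9_general (s : ℕ) (m : Matrix (Fin s) (Fin s) ℤ)
    (hsymm : ∀ i j, m i j = m j i)
    (hoff : ∀ i j, i ≠ j → m i j = 1 ∨ m i j = -1) :
    ∃ p : Fin s → ℕ, Function.Injective p ∧
      (∀ i, (p i).Prime ∧ Odd (p i) ∧ p i % 4 = 1) ∧
      (∀ i j, i ≠ j → m i j = jacobiSym (p i) (p j)) := by
  induction s with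
  | zero => exact ⟨finZeroElim, fun i => i.elim0, finZeroElim, finZeroElim⟩
  | succ s ih =>
    obtain ⟨p, hp_inj, hp, hpm⟩ := ih (m.submatrix Fin.succ Fin.succ) (fun i j => hsymm _ _)
      (fun i j hij => hoff _ _ (Fin.succ_injective _ |>.ne hij))
    obtain ⟨q, hqp, hq, hq4, hqm⟩ := Nat.exists_prime_gt_one_mod_four_and_jacobiSym_eq
      (fun i => (hp i).1) (fun i => (hp i).2.1) hp_inj
      (fun i => hoff 0 i.succ (Fin.succ_ne_zero i).symm) (univ.sup p)
    have hq_odd : Odd q := Nat.odd_iff.mpr (by omega)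
    have hq_notMem : q ∉ Set.range p := by
      rintro ⟨i, rfl⟩
      exact (le_sup (f := p) (mem_univ i)).not_gt hqp
    refine ⟨Fin.cons q p, Fin.cons_injective_iff.mpr ⟨hq_notMem, hp_inj⟩, ?_, ?_⟩
    · exact Fin.forall_fin_succ.mpr ⟨⟨hq, hq_odd, hq4⟩, hp⟩
    · refine Fin.forall_fin_succ.mpr
        ⟨Fin.forall_fin_succ.mpr ⟨fun h => (h rfl).elim, fun j _ => (hqm j).symm⟩, fun i => ?_⟩
      refine Fin.forall_fin_succ.mpr ⟨fun _ => ?_, fun j hij => ?_⟩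
      · rw [Fin.cons_zero, Fin.cons_succ, hsymm,
          ← jacobiSym.quadratic_reciprocity_one_mod_four hq4 (hp i).2.1]
        exact (hqm i).symm
      · exact hpm i j ((Fin.succ_injective _).ne_iff.mp hij)

theorem stmt_9 (s : ℕ) (m : Matrix (Fin s) (Fin s) ℤ)
    (hdiag : ∀ i, m i i = 0)
    (hsymm : ∀ i j, m i j = m j i)
    (hoff : ∀ i j, i ≠ j → m i j = 1 ∨ m i j = -1) :
    ∃ p : Fin s → ℕ, Function.Injective p ∧
      (∀ i, (p i).Prime ∧ Odd (p i) ∧ p i % 4 = 1) ∧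
      (∀ i j, i ≠ j → m i j = jacobiSym (p i) (p j)) :=
  stmt_9_general s m hsymm hoff
end
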